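/- Let S be a semigroup, b,c ∈ S¹, ρ a congruence on S. Then ρ_{b,c} = ρ if and only if the class bρ is left cancellable and cρ is right cancellable in (S/ρ)¹. -/

import Mathlib

/-! Since `b s c = (b s) c = b (s c)`, and multiplying by a fixed element of `S¹` preserves a
congruence, `ρ ⊆ ρ_{b,c}` always holds. The reverse inclusion then splits into cancellation of
`cρ` (peel `c` off `(b s) c`) followed by cancellation of `bρ`; conversely each cancellation
property is a special case of it, by putting the other factor on both sides. -/

/-- Any product `x * ↑s * y` in `S¹ = WithOne S` with middle factor in `S` lies in `S`. -/
theorem exists_coe_eq {S : Type*} [Semigroup S] (x y : WithOne S) (s : S) :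
    ∃ z : S, (z : WithOne S) = x * ↑s * y := by
  induction x using WithOne.recOneCoe with
  | one => induction y using WithOne.recOneCoe with
    | one => exact ⟨s, by simp⟩
    | coe b => exact ⟨s * b, by simp⟩
  | coe a => induction y using WithOne.recOneCoe with
    | one => exact ⟨a * s, by simp⟩
    | coe b => exact ⟨a * s * b, by simp [mul_assoc]⟩

/-- The element `x s y ∈ S` for `x, y ∈ S¹`, `s ∈ S`. -/
noncomputable def sand3 {S : Type*} [Semigroup S] (x : WithOne S) (s : S) (y : WithOne S) : S :=
  (exists_coe_eq x y s).choose

theorem sand3_spec {S : Type*} [Semigroup S] (x : WithOne S) (s : S) (y : WithOne S) :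
    (↑(sand3 x s y) : WithOne S) = x * ↑s * y :=
  (exists_coe_eq x y s).choose_spec

/-- `sand b c s = b s c ∈ S` for `b, c ∈ S¹`, `s ∈ S`. -/
noncomputable def sand {S : Type*} [Semigroup S] (b c : WithOne S) (s : S) : S := sand3 b s c

section Sandwich

variable {S : Type*} [Semigroup S]

theorem coe_sand (b c : WithOne S) (s : S) : (↑(sand b c s) : WithOne S) = b * ↑s * c :=
  sand3_spec b s c

theorem sand_one_sand (b c : WithOne S) (s : S) : sand 1 c (sand b 1 s) = sand b c s :=
  WithOne.coe_injective <| by simp only [coe_sand, one_mul, mul_one]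

theorem sand_sand_one (b c : WithOne S) (s : S) : sand b 1 (sand 1 c s) = sand b c s :=
  WithOne.coe_injective <| by simp only [coe_sand, one_mul, mul_one, mul_assoc]

theorem sand_one_coe (q s : S) : sand 1 q s = s * q :=
  WithOne.coe_injective <| by simp only [coe_sand, one_mul, WithOne.coe_mul]

theorem sand_coe_one (p s : S) : sand p 1 s = p * s :=
  WithOne.coe_injective <| by simp only [coe_sand, mul_one, WithOne.coe_mul]

theorem sand_one_one (s : S) : sand 1 1 s = s :=
  WithOne.coe_injective <| by simp only [coe_sand, one_mul, mul_one]

theorem Con.sand_one_left {r : Con S} (c : WithOne S) {s t : S} (h : r s t) :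
    r (sand 1 c s) (sand 1 c t) := by
  induction c using WithOne.recOneCoe with
  | one => simpa only [sand_one_one] using h
  | coe q => simpa only [sand_one_coe] using r.mul h (r.refl q)

theorem Con.sand_one_right {r : Con S} (b : WithOne S) {s t : S} (h : r s t) :
    r (sand b 1 s) (sand b 1 t) := by
  induction b using WithOne.recOneCoe with
  | one => simpa only [sand_one_one] using h
  | coe p => simpa only [sand_coe_one] using r.mul (r.refl p) h

end Sandwich

/-- `ρ_{b,c} = ρ` iff the class `bρ` is left cancellable and the class `cρ` is right
cancellable in `(S/ρ)¹` (cancellation being tested on classes of elements of `S`). -/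
theorem rho_bc_eq_rho_iff {S : Type*} [Semigroup S]
    (b c : WithOne S) (ρ : S → S → Prop) (hequiv : Equivalence ρ)
    (hcomp : ∀ s t u v : S, ρ s t → ρ u v → ρ (s * u) (t * v)) :
    (∀ s t : S, ρ (sand b c s) (sand b c t) ↔ ρ s t) ↔
      ((∀ s t : S, ρ (sand b 1 s) (sand b 1 t) → ρ s t) ∧
        (∀ s t : S, ρ (sand 1 c s) (sand 1 c t) → ρ s t)) := by
  let r : Con S := ⟨⟨ρ, hequiv⟩, hcomp _ _ _ _⟩
  constructor
  · intro H
    refine ⟨fun s t h => (H s t).1 ?_, fun s t h => (H s t).1 ?_⟩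
    · rw [← sand_one_sand b c s, ← sand_one_sand b c t]
      exact r.sand_one_left c h
    · rw [← sand_sand_one b c s, ← sand_sand_one b c t]
      exact r.sand_one_right b h
  · rintro ⟨hb, hc⟩ s t
    simp only [← sand_one_sand b c]
    exact ⟨fun h => hb _ _ (hc _ _ h), fun h => r.sand_one_left c (r.sand_one_right b h)⟩
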